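/- arXiv:2511.05440 — 2 statements merged into one kernel-verified Lean document; each statement's English description precedes it below -/
import Mathlib

section
/- A binary linear code C with generator matrix G is linear complementary dual (LCD), i.e. Hull(C) = {0}, if and only if the matrix G·Gᵀ is invertible. -/
open Matrix

/-- The dual code of a binary code `C`: all vectors orthogonal to every codeword. -/
def dualCode {ι : Type*} [Fintype ι] (C : Submodule (ZMod 2) (ι → ZMod 2)) :
    Submodule (ZMod 2) (ι → ZMod 2) where
  carrier := {x | ∀ c ∈ C, x ⬝ᵥ c = 0}
  add_mem' := by
    intro a b ha hb c hc
    simp [add_dotProduct, ha c hc, hb c hc]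
  zero_mem' := by
    intro c hc
    simp
  smul_mem' := by
    intro r a ha c hc
    simp [smul_dotProduct, ha c hc]

/-- The row space (the code generated by the rows) of a matrix over `F₂`. -/
def rowSpace {k : ℕ} {ι : Type*} [Fintype ι] (G : Matrix (Fin k) ι (ZMod 2)) :
    Submodule (ZMod 2) (ι → ZMod 2) :=
  Submodule.span (ZMod 2) (Set.range fun i => G i)

/-- The hull of a binary code: `C ∩ C⊥`. -/
def hullCode {ι : Type*} [Fintype ι] (C : Submodule (ZMod 2) (ι → ZMod 2)) :
    Submodule (ZMod 2) (ι → ZMod 2) :=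
  C ⊓ dualCode C

lemma mem_rowSpace_iff {k : ℕ} {ι : Type*} [Fintype ι] {G : Matrix (Fin k) ι (ZMod 2)}
    {c : ι → ZMod 2} : c ∈ rowSpace G ↔ ∃ x, x ᵥ* G = c := by
  rw [rowSpace, show (Set.range fun i => G i) = Set.range G.row from rfl, ← range_vecMulLinear]
  rfl

lemma dotProduct_vecMul_vecMul {R m ι : Type*} [CommSemiring R] [Fintype m] [Fintype ι]
    (G : Matrix m ι R) (x y : m → R) : (x ᵥ* G) ⬝ᵥ (y ᵥ* G) = (x ᵥ* (G * Gᵀ)) ⬝ᵥ y := by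
  rw [← vecMul_vecMul, vecMul_transpose, dotProduct_comm _ y, dotProduct_mulVec, dotProduct_comm]

lemma vecMul_mem_dualCode_rowSpace_iff {k : ℕ} {ι : Type*} [Fintype ι]
    {G : Matrix (Fin k) ι (ZMod 2)} {x : Fin k → ZMod 2} :
    x ᵥ* G ∈ dualCode (rowSpace G) ↔ x ᵥ* (G * Gᵀ) = 0 := by
  simp only [dualCode, Submodule.mem_mk, AddSubmonoid.mem_mk, AddSubsemigroup.mem_mk,
    Set.mem_ofPred_eq, mem_rowSpace_iff, forall_exists_index, forall_apply_eq_imp_iff,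
    dotProduct_vecMul_vecMul]
  refine ⟨fun h => funext fun i => ?_, fun h y => by rw [h, zero_dotProduct]⟩
  simpa using h (Pi.single i 1)

lemma hullCode_rowSpace {k : ℕ} {ι : Type*} [Fintype ι] (G : Matrix (Fin k) ι (ZMod 2)) :
    hullCode (rowSpace G) = (LinearMap.ker (vecMulLinear (G * Gᵀ))).map (vecMulLinear G) := by
  ext c
  simp only [hullCode, Submodule.mem_inf, Submodule.mem_map, LinearMap.mem_ker,
    vecMulLinear_apply]
  constructor
  · rintro ⟨hc, hcd⟩
    obtain ⟨x, rfl⟩ := mem_rowSpace_iff.1 hc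
    exact ⟨x, vecMul_mem_dualCode_rowSpace_iff.1 hcd, rfl⟩
  · rintro ⟨x, hx, rfl⟩
    exact ⟨mem_rowSpace_iff.2 ⟨x, rfl⟩, vecMul_mem_dualCode_rowSpace_iff.2 hx⟩

/-- C is LCD (trivial hull) iff G·Gᵀ is invertible. -/
theorem stmt_4 {k n : ℕ} (G : Matrix (Fin k) (Fin n) (ZMod 2))
    (hG : LinearIndependent (ZMod 2) (fun i => G i)) :
    hullCode (rowSpace G) = ⊥ ↔ IsUnit (G * Gᵀ) := by
  have hinj : Function.Injective (vecMulLinear G) := vecMul_injective_iff.2 hG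
  rw [hullCode_rowSpace, ← Submodule.map_bot (vecMulLinear G),
    (Submodule.map_injective_of_injective hinj).eq_iff, LinearMap.ker_eq_bot,
    coe_vecMulLinear, vecMul_injective_iff_isUnit]
end

section
/- Let A be a k×n matrix over F₂ generating an LCD code (so A·Aᵀ is invertible), and suppose the code ⟨A⟩ is even (all codewords have even weight). Then for every column vector v ∈ F₂ᵏ, the code generated by [A | v] has trivial hull. -/
/-!
Write `c ∈ Hull ⟨[A | v]⟩` as `(u, c*)`. Then `u ∈ ⟨A⟩` has even weight, so over `F₂` the
self-orthogonality `c ⬝ c = u ⬝ u + c*² = 0` forces `c* = 0`. Hence `u` is orthogonal to every row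
of `A`, i.e. `u ∈ Hull ⟨A⟩`, which is trivial because `A Aᵀ` is invertible: writing `u = Aᵀ y`,
`A u = A Aᵀ y = 0` gives `y = 0`.
-/

open Matrix

section

variable {ι : Type*} [Fintype ι]

lemma dotProduct_self_eq_hammingNorm (x : ι → ZMod 2) :
    x ⬝ᵥ x = (hammingNorm x : ZMod 2) := by
  unfold hammingNorm dotProduct
  rw [Finset.card_filter, Nat.cast_sum]
  refine Finset.sum_congr rfl fun i _ => ?_
  generalize x i = a
  exact (by decide : ∀ a : ZMod 2, a * a = ((if a ≠ 0 then 1 else 0 : ℕ) : ZMod 2)) a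

lemma dotProduct_self_eq_zero_of_even {x : ι → ZMod 2} (h : Even (hammingNorm x)) :
    x ⬝ᵥ x = 0 := by
  rw [dotProduct_self_eq_hammingNorm, ZMod.natCast_eq_zero_iff_even]
  exact h

variable {k : ℕ}

lemma rowSpace_eq_range_vecMul (G : Matrix (Fin k) ι (ZMod 2)) :
    rowSpace G = LinearMap.range G.vecMulLinear :=
  (range_vecMulLinear G).symm

lemma mem_dualCode_rowSpace_iff {G : Matrix (Fin k) ι (ZMod 2)} {x : ι → ZMod 2} :
    x ∈ dualCode (rowSpace G) ↔ G *ᵥ x = 0 := by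
  refine ⟨fun hx => funext fun i => ?_, fun hx c hc => ?_⟩
  · rw [mulVec, dotProduct_comm]
    exact hx _ (Submodule.subset_span ⟨i, rfl⟩)
  · rw [rowSpace_eq_range_vecMul] at hc
    obtain ⟨y, rfl⟩ := hc
    rw [vecMulLinear_apply, dotProduct_comm, ← dotProduct_mulVec, hx, dotProduct_zero]

lemma hullCode_rowSpace_eq_bot {G : Matrix (Fin k) ι (ZMod 2)} (hG : IsUnit (G * Gᵀ)) :
    hullCode (rowSpace G) = ⊥ := by
  rw [Submodule.eq_bot_iff]
  intro x hx
  obtain ⟨hx, hxdual⟩ := Submodule.mem_inf.mp hx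
  rw [rowSpace_eq_range_vecMul] at hx
  obtain ⟨y, rfl⟩ := hx
  have hGy : (G * Gᵀ) *ᵥ y = 0 := by
    rw [← mulVec_mulVec, ← vecMul_transpose Gᵀ, transpose_transpose, ← vecMulLinear_apply]
    exact mem_dualCode_rowSpace_iff.mp hxdual
  rw [(mulVec_injective_iff_isUnit.mpr hG) (hGy.trans (mulVec_zero _).symm)]
  exact zero_vecMul G

lemma comp_inl_mem_rowSpace_of_mem_rowSpace_fromCols {κ : Type*} [Fintype κ]
    {G : Matrix (Fin k) ι (ZMod 2)} {W : Matrix (Fin k) κ (ZMod 2)} {x : ι ⊕ κ → ZMod 2}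
    (hx : x ∈ rowSpace (fromCols G W)) :
    x ∘ Sum.inl ∈ rowSpace G := by
  rw [rowSpace_eq_range_vecMul] at hx ⊢
  obtain ⟨y, rfl⟩ := hx
  exact ⟨y, by simp⟩

end

theorem stmt_15_general {k n : ℕ} (A : Matrix (Fin k) (Fin n) (ZMod 2))
    (hLCD : IsUnit (A * Aᵀ))
    (heven : ∀ x ∈ rowSpace A, Even (hammingNorm x))
    (v : Fin k → ZMod 2) :
    hullCode (rowSpace ((fun i => Sum.elim (A i) (fun _ => v i)) :
      Matrix (Fin k) (Fin n ⊕ Unit) (ZMod 2))) = ⊥ := by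
  change hullCode (rowSpace (fromCols A (replicateCol Unit v))) = ⊥
  rw [Submodule.eq_bot_iff]
  intro c hc
  obtain ⟨hc, hcdual⟩ := Submodule.mem_inf.mp hc
  have hu : c ∘ Sum.inl ∈ rowSpace A := comp_inl_mem_rowSpace_of_mem_rowSpace_fromCols hc
  have hlast : c ∘ Sum.inr = 0 := by
    have hcc : c ⬝ᵥ c = 0 := hcdual c hc
    rw [← Sum.elim_comp_inl_inr c, sumElim_dotProduct_sumElim,
      dotProduct_self_eq_zero_of_even (heven _ hu), zero_add] at hcc
    funext ⟨⟩
    simpa using hcc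
  have hudual : c ∘ Sum.inl ∈ dualCode (rowSpace A) := by
    have hBc := mem_dualCode_rowSpace_iff.mp hcdual
    rw [fromCols_mulVec, hlast, mulVec_zero, add_zero] at hBc
    exact mem_dualCode_rowSpace_iff.mpr hBc
  have hu0 : c ∘ Sum.inl = 0 := by
    have h : c ∘ Sum.inl ∈ hullCode (rowSpace A) := Submodule.mem_inf.mpr ⟨hu, hudual⟩
    rwa [hullCode_rowSpace_eq_bot hLCD, Submodule.mem_bot] at h
  rw [← Sum.elim_comp_inl_inr c, hu0, hlast, Sum.elim_zero_zero]

/-- if A generates an even LCD code, then for any appended column v the code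
generated by [A | v] has trivial hull. -/
theorem stmt_15 {k n : ℕ} (A : Matrix (Fin k) (Fin n) (ZMod 2))
    (hA : LinearIndependent (ZMod 2) (fun i => A i))
    (hLCD : IsUnit (A * Aᵀ))
    (heven : ∀ x ∈ rowSpace A, Even (hammingNorm x))
    (v : Fin k → ZMod 2) :
    hullCode (rowSpace ((fun i => Sum.elim (A i) (fun _ => v i)) :
      Matrix (Fin k) (Fin n ⊕ Unit) (ZMod 2))) = ⊥ :=
  stmt_15_general A hLCD heven v
end
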